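/- arXiv:2002.12424 — 2 statements merged into one kernel-verified Lean document; each statement's English description precedes it below -/
import Mathlib

section
/- Let S be a normal projective surface and {C_i : i ∈ I} an infinite collection of distinct irreducible curves on S such that all pairwise intersection numbers (C_{i₁} · C_{i₂}) for i₁ ≠ i₂ are positive and bounded above by d₁. Then the self-intersection numbers (C_i²) are bounded below: there exists d₂ > 0 such that (C_i²) ≥ −d₂ for all but finitely many i. More precisely, for every r, one cannot have r curves C_j from the family, pairwise intersection at most d₁, each with (C_j²) < −r·d₁, once r exceeds the rank of the divisor class group modulo algebraic equivalence, because such curves would have negative definite intersection matrix. -/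
/-- Let `S` be a normal projective surface, encoded by its finite-dimensional
ℚ-vector space `N` of divisor classes modulo algebraic equivalence (class rank is finite) with
symmetric intersection pairing, and let `{C_i : i ∈ I}` be an infinite family of distinct
irreducible curves whose pairwise intersection numbers are positive and bounded above by `d₁`.
Then the self-intersections `(C_i²)` are bounded below outside a finite set: there is `d₂ > 0`
with `(C_i²) ≥ −d₂` for all but finitely many `i` (one cannot have arbitrarily many classes
with `(C_j²) < −r·d₁`, since they would form a negative definite, hence linearly independent,
family exceeding the class rank). -/
theorem stmt_11 {N : Type*} [AddCommGroup N] [Module ℚ N] [FiniteDimensional ℚ N]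
    (pair : N →ₗ[ℚ] N →ₗ[ℚ] ℚ)
    (hsymm : ∀ x y, pair x y = pair y x)
    (Curve : Set N)
    {I : Type*} [Infinite I] (C : I → N)
    (hinj : Function.Injective C) (hC : ∀ i, C i ∈ Curve)
    (d₁ : ℚ)
    (hpair : ∀ i j, i ≠ j → 0 < pair (C i) (C j) ∧ pair (C i) (C j) ≤ d₁) :
    ∃ d₂ : ℚ, 0 < d₂ ∧ {i : I | pair (C i) (C i) < -d₂}.Finite := by
  classical
  obtain ⟨i₀, j₀, hij₀⟩ := exists_pair_ne I
  have hd₁ : 0 < d₁ := lt_of_lt_of_le (hpair i₀ j₀ hij₀).1 (hpair i₀ j₀ hij₀).2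
  set n := Module.finrank ℚ N with hn
  refine ⟨(n + 1) * d₁, by positivity, ?_⟩
  by_contra hinf
  rw [← Set.not_infinite, not_not] at hinf
  obtain ⟨t, hts, htc⟩ := hinf.exists_subset_card_eq (n + 1)
  have hcard : Fintype.card t = n + 1 := by simp [htc]
  have hli : LinearIndependent ℚ (fun i : t => C i) := by
    rw [Fintype.linearIndependent_iff]
    intro g hg
    by_contra hne
    push_neg at hne
    obtain ⟨i₁, hi₁⟩ := hne
    obtain ⟨j, -, hj⟩ := Finset.exists_max_image (Finset.univ : Finset t)
      (fun i => |g i|) ⟨i₁, Finset.mem_univ _⟩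
    have hgj : 0 < |g j| := lt_of_lt_of_le (abs_pos.mpr hi₁) (hj i₁ (Finset.mem_univ _))
    have h0 : ∑ i : t, g i * pair (C i) (C j) = 0 := by
      have := congrArg (fun x => pair x (C j)) hg
      simpa [map_sum, smul_eq_mul] using this
    rw [← Finset.add_sum_erase _ _ (Finset.mem_univ j)] at h0
    have hjj : pair (C (j : I)) (C (j : I)) < -((n + 1) * d₁) := hts j.2
    -- bound the off-diagonal sum
    have hbound : |∑ i ∈ Finset.univ.erase j, g i * pair (C i) (C j)|
        ≤ (n : ℚ) * (|g j| * d₁) := by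
      calc |∑ i ∈ Finset.univ.erase j, g i * pair (C i) (C j)|
          ≤ ∑ i ∈ Finset.univ.erase j, |g i * pair (C i) (C j)| :=
            Finset.abs_sum_le_sum_abs _ _
        _ ≤ ∑ _i ∈ Finset.univ.erase j, |g j| * d₁ := by
            refine Finset.sum_le_sum fun i hi => ?_
            have hij : (i : I) ≠ (j : I) := by
              intro h
              exact (Finset.mem_erase.mp hi).1 (Subtype.ext h)
            have hp := hpair i j hij
            rw [abs_mul]
            have h1 : |pair (C (i : I)) (C (j : I))| ≤ d₁ := by
              rw [abs_of_pos hp.1]; exact hp.2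
            have h2 : |g i| ≤ |g j| := hj i (Finset.mem_univ _)
            exact mul_le_mul h2 h1 (abs_nonneg _) (abs_nonneg _)
        _ = (n : ℚ) * (|g j| * d₁) := by
            rw [Finset.sum_const, Finset.card_erase_of_mem (Finset.mem_univ _),
              Finset.card_univ, hcard]
            simp [nsmul_eq_mul]
    have heq : |g j * pair (C (j : I)) (C (j : I))|
        = |∑ i ∈ Finset.univ.erase j, g i * pair (C i) (C j)| := by
      have : g j * pair (C (j : I)) (C (j : I))
          = -∑ i ∈ Finset.univ.erase j, g i * pair (C i) (C j) := by linarith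
      rw [this, abs_neg]
    have hlarge : |g j| * ((n + 1) * d₁) < |g j * pair (C (j : I)) (C (j : I))| := by
      rw [abs_mul]
      have : ((n : ℚ) + 1) * d₁ < |pair (C (j : I)) (C (j : I))| := by
        rw [abs_of_neg (by nlinarith)]
        linarith
      have := mul_lt_mul_of_pos_left this hgj
      push_cast
      linarith
    rw [heq] at hlarge
    have : |g j| * ((n + 1) * d₁) < (n : ℚ) * (|g j| * d₁) := lt_of_lt_of_le hlarge hbound
    nlinarith [hgj, hd₁]
  have := hli.fintype_card_le_finrank
  rw [hcard] at this
  omega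
end

section
/- Let a₁, …, a_{2g} be elements of a rank-1 valuation ring R (inside its fraction field K with valuation v) such that v(a_i) = 0 and v(a_i − a_j) = 0 for all i ≠ j. Suppose z₁, …, z_s ∈ K, integers m_j, and n ≠ 0, u₁, …, u_g ∈ K^× with v(u_i) ≠ 0 for all i, satisfy ∏_j ((a_i − z_j)/(a_{g+i} − z_j))^{m_j} = u_i^n for i = 1, …, g. Then s ≥ g; that is, there are at least g distinct z_j. -/
/-- Let `v` be a (multiplicative) valuation on a field `K`, and
`a 0, …, a (2g−1)` elements with `v(a i) = 1` and `v(a i − a j) = 1` for `i ≠ j`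
(additively: valuation `0`).  Suppose distinct `z 1, …, z s ∈ K`, integers `m j`, `n ≠ 0`,
and `u 1, …, u g ∈ K^×` with `v(u i) ≠ 1` satisfy
`∏_j ((a i − z j)/(a (g+i) − z j))^{m j} = (u i)^n` for `i = 0, …, g−1`.
Then `s ≥ g`: there are at least `g` distinct `z j`. -/
theorem stmt_14 {K Γ : Type*} [Field K] [LinearOrderedCommGroupWithZero Γ]
    (v : Valuation K Γ) (g s : ℕ)
    (a : ℕ → K)
    (ha : ∀ i < 2 * g, v (a i) = 1)
    (hab : ∀ i < 2 * g, ∀ j < 2 * g, i ≠ j → v (a i - a j) = 1)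
    (z : Fin s → K) (hzinj : Function.Injective z)
    (m : Fin s → ℤ) (n : ℤ) (hn : n ≠ 0)
    (u : Fin g → K) (hu : ∀ i, u i ≠ 0 ∧ v (u i) ≠ 1)
    (heq : ∀ i : Fin g,
      (∏ j, ((a i.val - z j) / (a (g + i.val) - z j)) ^ (m j)) = (u i) ^ n) :
    g ≤ s := by
  -- For each i, find j and a side k ∈ {i, g+i} with v (a k - z j) < 1.
  have key : ∀ i : Fin g, ∃ j : Fin s, ∃ k : ℕ,
      (k = i.val ∨ k = g + i.val) ∧ v (a k - z j) < 1 := by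
    intro i
    have hilt : (i : ℕ) < g := i.isLt
    have hne : (i : ℕ) ≠ g + i := by omega
    have h1 : v (a i - a (g + i)) = 1 := hab i (by omega) (g + i) (by omega) hne
    -- the valuation of the RHS is ≠ 1
    have hvu : v ((u i) ^ n) ≠ 1 := by
      rw [map_zpow₀]
      intro hcontra
      have hx0 : v (u i) ≠ 0 := by
        simpa using (hu i).1
      lift v (u i) to Γˣ using isUnit_iff_ne_zero.mpr hx0 with x hx
      have : x ^ n = 1 := by exact_mod_cast hcontra
      have : x = 1 := zpow_left_injective hn (by simpa using this)
      exact (hu i).2 (by rw [← hx, this, Units.val_one])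
    rw [← heq i, map_prod] at hvu
    have : ∃ j : Fin s, v (((a i.val - z j) / (a (g + i.val) - z j)) ^ (m j)) ≠ 1 := by
      by_contra hc
      push_neg at hc
      exact hvu (Finset.prod_eq_one fun j _ => hc j)
    obtain ⟨j, hj⟩ := this
    rw [map_zpow₀, map_div₀] at hj
    have hratio : v (a i.val - z j) / v (a (g + i.val) - z j) ≠ 1 := by
      intro h; exact hj (by rw [h, one_zpow])
    have hαβ : v (a i.val - z j) ≠ v (a (g + i.val) - z j) := by
      intro h
      rcases eq_or_ne (v (a (g + i.val) - z j)) 0 with h0 | h0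
      · -- both valuations zero ⇒ both differences zero ⇒ a i = a (g+i)
        have hz1 : a i.val - z j = 0 := by
          have := h.trans h0
          exact (Valuation.zero_iff v).mp this
        have hz2 : a (g + i.val) - z j = 0 := (Valuation.zero_iff v).mp h0
        have : a i.val - a (g + i.val) = 0 := by
          have e1 := sub_eq_zero.mp hz1
          have e2 := sub_eq_zero.mp hz2
          rw [sub_eq_zero, e1, e2]
        rw [this, map_zero] at h1
        exact zero_ne_one h1
      · exact hratio (by rw [h, div_self h0])
    -- ultrametric: v (a i - a (g+i)) = max of the two, which is 1
    have hmax : max (v (a i.val - z j)) (v (a (g + i.val) - z j)) = 1 := by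
      have : a i.val - a (g + i.val) = (a i.val - z j) - (a (g + i.val) - z j) := by ring
      rw [this] at h1
      rwa [sub_eq_add_neg, Valuation.map_add_of_distinct_val v (by rw [Valuation.map_neg]; exact hαβ),
        Valuation.map_neg] at h1
    rcases hαβ.lt_or_gt with hlt | hlt
    · refine ⟨j, i.val, Or.inl rfl, ?_⟩
      exact hlt.trans_le (hmax ▸ le_max_right _ _)
    · refine ⟨j, g + i.val, Or.inr rfl, ?_⟩
      exact hlt.trans_le (hmax ▸ le_max_left _ _)
  choose f k hk hklt using key
  have hfinj : Function.Injective f := by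
    intro i1 i2 hf
    by_contra hne12
    have hk1 := hklt i1
    have hk2 := hklt i2
    rw [hf] at hk1
    have hkne : k i1 ≠ k i2 := by
      rcases hk i1 with h1 | h1 <;> rcases hk i2 with h2 | h2 <;>
        · rw [h1, h2]
          have := i1.isLt; have := i2.isLt
          omega
    have hklt1 : k i1 < 2 * g := by
      rcases hk i1 with h | h <;> · have := i1.isLt; omega
    have hklt2 : k i2 < 2 * g := by
      rcases hk i2 with h | h <;> · have := i2.isLt; omega
    have h1 : v (a (k i1) - a (k i2)) = 1 := hab _ hklt1 _ hklt2 hkne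
    have : a (k i1) - a (k i2) = (a (k i1) - z (f i2)) - (a (k i2) - z (f i2)) := by ring
    have hle : v (a (k i1) - a (k i2)) < 1 := by
      rw [this]
      calc v ((a (k i1) - z (f i2)) - (a (k i2) - z (f i2)))
          ≤ max (v (a (k i1) - z (f i2))) (v (a (k i2) - z (f i2))) := Valuation.map_sub v _ _
        _ < 1 := max_lt hk1 hk2
    rw [h1] at hle
    exact lt_irrefl _ hle
  have := Fintype.card_le_of_injective f hfinj
  simpa using this
end
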